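/- Let φ: ℂP¹ → ℂP¹ be a rational map of degree d that commutes with the antipodal map σ(z) = -1/z̄. Then d is odd. -/

import Mathlib

open Polynomial

/-- The "quaternionic structure" map on polynomials of degree ≤ k:
`tau k f = (-t)^k ⬝ conj (f (-1/t̄))`, i.e. `(tau k f).coeff i = (-1)^(k-i) conj (f.coeff (k-i))`. -/
noncomputable def tau (k : ℕ) (f : Polynomial ℂ) : Polynomial ℂ :=
  ∑ i ∈ Finset.range (k + 1), C ((-1 : ℂ) ^ (k - i) * (starRingEnd ℂ) (f.coeff (k - i))) * X ^ i

/-!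
Up to the factor `(-t)^d`, `tau d` is the pullback of conjugation along the antipodal map, so it is
a conjugate-linear operator on polynomials of degree `≤ d` with `tau d ∘ tau d = (-1)^d`.
If `φ = p/q` with `deg q = d`, coprimality turns `tau p ⬝ p + tau q ⬝ q = 0` into
`tau q = γ p` and `tau p = -γ q` for a constant `γ`; applying `tau` once more gives
`(-1)^d q = tau (γ p) = -|γ|² q`, so `(-1)^d` is negative and `d` is odd.
-/

section Tau

variable (k : ℕ)

lemma coeff_tau (f : ℂ[X]) (i : ℕ) :
    (tau k f).coeff i =
      if i ≤ k then (-1 : ℂ) ^ (k - i) * starRingEnd ℂ (f.coeff (k - i)) else 0 := by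
  simp only [tau, finsetSum_coeff, coeff_C_mul, coeff_X_pow, mul_ite, mul_one, mul_zero,
    Finset.sum_ite_eq, Finset.mem_range, Nat.lt_succ_iff]

lemma natDegree_tau_le (f : ℂ[X]) : (tau k f).natDegree ≤ k := by
  refine natDegree_le_iff_coeff_eq_zero.mpr fun i hi => ?_
  simp [coeff_tau, Nat.not_le.mpr hi]

lemma tau_ne_zero {f : ℂ[X]} (hf : f ≠ 0) (hdeg : f.natDegree ≤ k) : tau k f ≠ 0 := by
  intro h
  have hcoeff := congrArg (coeff · (k - f.natDegree)) h
  simp only [coeff_tau, coeff_zero, if_pos (Nat.sub_le k _), Nat.sub_sub_self hdeg] at hcoeff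
  simp [hf] at hcoeff

lemma tau_C_mul (γ : ℂ) (f : ℂ[X]) : tau k (C γ * f) = C (starRingEnd ℂ γ) * tau k f := by
  ext i
  simp only [coeff_C_mul, coeff_tau, map_mul]
  split_ifs <;> ring

lemma tau_tau {f : ℂ[X]} (hdeg : f.natDegree ≤ k) :
    tau k (tau k f) = C ((-1 : ℂ) ^ k) * f := by
  ext i
  rw [coeff_C_mul, coeff_tau]
  split_ifs with hi
  · rw [coeff_tau, if_pos (Nat.sub_le k i), Nat.sub_sub_self hi, map_mul, map_pow, map_neg,
      map_one, Complex.conj_conj, ← mul_assoc, ← pow_add, Nat.sub_add_cancel hi]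
  · rw [coeff_eq_zero_of_natDegree_lt (hdeg.trans_lt (Nat.lt_of_not_le hi)), mul_zero]

end Tau

lemma odd_of_neg_one_pow_eq_neg_conj_mul_self {d : ℕ} {γ : ℂ}
    (h : (-1 : ℂ) ^ d = -(starRingEnd ℂ γ * γ)) : Odd d := by
  refine (Nat.even_or_odd d).resolve_left fun heven => ?_
  rw [heven.neg_one_pow, ← Complex.normSq_eq_conj_mul_self] at h
  have h' : (1 : ℝ) = -Complex.normSq γ := by exact_mod_cast h
  linarith [Complex.normSq_nonneg γ]

section AntipodalCommuting

variable {d : ℕ} {p q : ℂ[X]}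

lemma ne_zero_of_tau_mul_add_tau_mul_eq_zero (hcop : IsCoprime p q) (hp : p.natDegree ≤ d)
    (hcomm : tau d p * p + tau d q * q = 0) : q ≠ 0 := by
  rintro rfl
  have hp0 : p ≠ 0 := fun h => not_isCoprime_zero_zero (h ▸ hcop)
  exact mul_ne_zero (tau_ne_zero d hp0 hp) hp0 (by simpa using hcomm)

lemma exists_tau_eq_C_mul (hcop : IsCoprime p q) (hp : p.natDegree ≤ d) (hq : q.natDegree = d)
    (hcomm : tau d p * p + tau d q * q = 0) :
    ∃ γ : ℂ, tau d q = C γ * p ∧ tau d p = -(C γ * q) := by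
  have hq0 : q ≠ 0 := ne_zero_of_tau_mul_add_tau_mul_eq_zero hcop hp hcomm
  have hp0 : p ≠ 0 :=
    ne_zero_of_tau_mul_add_tau_mul_eq_zero hcop.symm hq.le (by rwa [add_comm])
  obtain ⟨c, hc⟩ : p ∣ tau d q :=
    hcop.dvd_of_dvd_mul_right ⟨-tau d p, by linear_combination hcomm⟩
  have htp : tau d p = -(c * q) :=
    mul_right_cancel₀ hp0 (by rw [hc] at hcomm; linear_combination hcomm)
  have hc0 : c ≠ 0 := by
    rintro rfl
    exact tau_ne_zero d hq0 hq.le (by simpa using hc)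
  have hcdeg : c.natDegree = 0 := by
    have := natDegree_tau_le d p
    rw [htp, natDegree_neg, natDegree_mul hc0 hq0, hq] at this
    omega
  refine ⟨c.coeff 0, ?_, ?_⟩
  · rw [hc, mul_comm, ← eq_C_of_natDegree_eq_zero hcdeg]
  · rw [htp, ← eq_C_of_natDegree_eq_zero hcdeg]

lemma odd_of_tau_mul_add_tau_mul_eq_zero (hcop : IsCoprime p q) (hp : p.natDegree ≤ d)
    (hq : q.natDegree = d) (hcomm : tau d p * p + tau d q * q = 0) : Odd d := by
  obtain ⟨γ, hτq, hτp⟩ := exists_tau_eq_C_mul hcop hp hq hcomm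
  have hq0 : q ≠ 0 := ne_zero_of_tau_mul_add_tau_mul_eq_zero hcop hp hcomm
  have hsign : C ((-1 : ℂ) ^ d) * q = C (-(starRingEnd ℂ γ * γ)) * q := by
    rw [← tau_tau d hq.le, hτq, tau_C_mul, hτp]
    simp only [map_neg, map_mul]
    ring
  exact odd_of_neg_one_pow_eq_neg_conj_mul_self (C_inj.mp (mul_right_cancel₀ hq0 hsign))

end AntipodalCommuting

/-- A rational map `φ = p/q : ℂP¹ → ℂP¹` of degree `d` (given by coprime polynomials with
`max (deg p) (deg q) = d`) which commutes with the antipodal map `z ↦ -1/z̄`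
(equivalently, `tau d p ⬝ p + tau d q ⬝ q = 0` as polynomials) has odd degree. -/
theorem degree_odd_of_commutes_with_antipodal (d : ℕ) (p q : Polynomial ℂ)
    (hcop : IsCoprime p q) (hdeg : max p.natDegree q.natDegree = d)
    (hcomm : tau d p * p + tau d q * q = 0) :
    Odd d := by
  rcases le_total p.natDegree q.natDegree with h | h
  · exact odd_of_tau_mul_add_tau_mul_eq_zero hcop (hdeg ▸ le_max_left _ _)
      (by rw [← hdeg, max_eq_right h]) hcomm
  · exact odd_of_tau_mul_add_tau_mul_eq_zero hcop.symm (hdeg ▸ le_max_right _ _)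
      (by rw [← hdeg, max_eq_left h]) (by rwa [add_comm])
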